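/- For every n ≥ 2 there is a constant C = C(n) > 0 with the following property. Let K ⊂ ℝⁿ be a convex body containing the origin in its interior, let R > 0, and write h_K = R + ω on S^{n−1}. Let e ∈ S^{n−1} and ϑ ∈ (0, π/2), and assume h_K(e) ≤ R cos ϑ. Then |ω(e)| ≤ C · σ(S_ϑ(e))^{−1} ∫_{S_ϑ(e)} |ω(e′)| dσ(e′). -/

import Mathlib

/-!
Write `ω = h_K - R` and `δ = R - h_K(e) > 0`. Let `x` be at polar angle `α ∈ [ϑ/8, ϑ/4]` about
`e` (the band `A`), and let `y` be the point on the meridian of `x` at polar angle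
`β = 2α + ϑ/2 ≤ ϑ`. Then `x = s e + t y` with `s, t ≥ 0` and `s - t ≥ 1/2`, so sublinearity of
`h_K` and `h_K(e) ≤ R cos ϑ` give `δ/2 ≤ |ω(x)| + |ω(y)|`: every point of `A` lies in, or is
moved into, `G = {|ω| ≥ δ/4}`. The move `x ↦ y` is undone by the Lipschitz move `β ↦ β/2 - ϑ/4`
along meridians, so `μ(A \ G) ≲ μ(G)`; the cap is a Lipschitz image of `A` under the move
`α ↦ 8α - ϑ`; hence `σ(S_ϑ(e)) ≲ σ(A) ≲ σ(G)`, and Chebyshev's inequality concludes. That `σ` of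
a cap is finite and positive comes from writing the cap as a Lipschitz graph over a ball in
`e^⊥`.
-/

open MeasureTheory Metric Set Real
open scoped ENNReal RealInnerProductSpace Pointwise

noncomputable section

abbrev Eucl (n : ℕ) := EuclideanSpace ℝ (Fin n)

/-- The support function of a set `K`. -/
def suppFn {n : ℕ} (K : Set (Eucl n)) (θ : Eucl n) : ℝ :=
  sSup ((fun x => ⟪x, θ⟫) '' K)

/-- The radial function of a set `K`. -/
def radFn {n : ℕ} (K : Set (Eucl n)) (θ : Eucl n) : ℝ :=
  sSup {t : ℝ | 0 < t ∧ t • θ ∈ K}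

/-- An origin-symmetric convex body. -/
def IsSymmConvexBody {n : ℕ} (K : Set (Eucl n)) : Prop :=
  Convex ℝ K ∧ IsCompact K ∧ (interior K).Nonempty ∧ K = -K

/-- `vol_{n-1}(K ∩ θ^⊥)`, the `(n-1)`-dimensional Hausdorff measure of the
central hyperplane section of `K` orthogonal to `θ`. -/
def secVol (n : ℕ) (K : Set (Eucl n)) (θ : Eucl n) : ℝ :=
  (μH[(n : ℝ) - 1] (K ∩ {x : Eucl n | ⟪x, θ⟫ = 0})).toReal


/-- The rotation-invariant probability measure on the unit sphere `S^{n-1}`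
(normalized `(n-1)`-dimensional Hausdorff measure). -/
def sphσ (n : ℕ) : Measure (Eucl n) :=
  (μH[(n : ℝ) - 1] (sphere (0 : Eucl n) 1))⁻¹ •
    (μH[(n : ℝ) - 1]).restrict (sphere (0 : Eucl n) 1)

/-- The spherical cap `S_ϑ(e) = {x ∈ S^{n-1} : ⟨e,x⟩ ≥ cos ϑ}`. -/
def cap {n : ℕ} (e : Eucl n) (ϑ : ℝ) : Set (Eucl n) :=
  {x ∈ sphere (0 : Eucl n) 1 | Real.cos ϑ ≤ ⟪e, x⟫}


open InnerProductGeometry Module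
open scoped NNReal

lemma one_sub_cos_mul_le (k : ℝ) {t : ℝ} (ht : |t| ≤ π) :
    1 - cos (k * t) ≤ (k * π / 2) ^ 2 * (1 - cos t) := by
  have hπ := pi_pos
  calc 1 - cos (k * t) ≤ (k * t) ^ 2 / 2 := by linarith [one_sub_sq_div_two_le_cos (x := k * t)]
    _ = (k * π / 2) ^ 2 * (2 / π ^ 2 * t ^ 2) := by field_simp
    _ ≤ (k * π / 2) ^ 2 * (1 - cos t) := by
        gcongr; linarith [cos_le_one_sub_mul_cos_sq ht]

lemma sin_le_mul_sin {k u α : ℝ} (hk : 0 ≤ k) (hu : 0 ≤ u) (huα : u ≤ k * α) (hα : 0 ≤ α)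
    (hα' : α ≤ π / 2) : sin u ≤ k * π / 2 * sin α := by
  have hπ := pi_pos
  calc sin u ≤ k * α := (sin_le hu).trans huα
    _ = k * π / 2 * (2 / π * α) := by field_simp
    _ ≤ k * π / 2 * sin α := by gcongr; exact mul_le_sin hα hα'

lemma sin_sub_div_add_div_mul_cos {α β : ℝ} (hβ : sin β ≠ 0) :
    sin (β - α) / sin β + sin α / sin β * cos β = cos α := by
  rw [sin_sub]
  field_simp
  ring

lemma sin_add_half_sin_le {α ϑ : ℝ} (hα : 0 ≤ α) (hαϑ : α ≤ ϑ / 4) (hϑ : ϑ ≤ π / 2) :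
    sin α + sin (2 * α + ϑ / 2) / 2 ≤ sin (α + ϑ / 2) := by
  have hπ := pi_pos
  have hdiff : sin (α + ϑ / 2) - sin α = 2 * sin (ϑ / 4) * cos (α + ϑ / 4) := by
    rw [sin_sub_sin]; ring_nf
  have hdouble : sin (2 * α + ϑ / 2) = 2 * sin (α + ϑ / 4) * cos (α + ϑ / 4) := by
    rw [← sin_two_mul]; ring_nf
  have hsin : sin (α + ϑ / 4) ≤ 2 * sin (ϑ / 4) :=
    calc sin (α + ϑ / 4) ≤ sin (2 * (ϑ / 4)) :=
          sin_le_sin_of_le_of_le_pi_div_two (by linarith) (by linarith) (by linarith)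
      _ = 2 * sin (ϑ / 4) * cos (ϑ / 4) := sin_two_mul _
      _ ≤ 2 * sin (ϑ / 4) := by
          have hsin4 := sin_nonneg_of_nonneg_of_le_pi (by linarith : 0 ≤ ϑ / 4) (by linarith)
          nlinarith [cos_le_one (ϑ / 4)]
  have hcos : 0 ≤ cos (α + ϑ / 4) := cos_nonneg_of_mem_Icc ⟨by linarith, by linarith⟩
  nlinarith [mul_le_mul_of_nonneg_right hsin hcos]

section Meridian

variable {E : Type*} [NormedAddCommGroup E] [InnerProductSpace ℝ E] {e : E}

/-- Moves a unit vector at angle `θ` from `e` along its meridian to angle `g θ`. -/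
def meridianMap (e : E) (g : ℝ → ℝ) (x : E) : E :=
  cos (g (angle e x)) • e + (sin (g (angle e x)) / sin (angle e x)) • (x - ⟪e, x⟫ • e)

def polarBand (e : E) (a b : ℝ) : Set E :=
  {x ∈ sphere (0 : E) 1 | angle e x ∈ Icc a b}

lemma norm_eq_one_of_mem_polarBand {a b : ℝ} {x : E} (hx : x ∈ polarBand e a b) : ‖x‖ = 1 :=
  mem_sphere_zero_iff_norm.1 hx.1

lemma sin_angle_pos_of_mem_polarBand {a b : ℝ} (ha : 0 < a) (hb : b < π) {x : E}
    (hx : x ∈ polarBand e a b) : 0 < sin (angle e x) :=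
  sin_pos_of_pos_of_lt_pi (ha.trans_le hx.2.1) (hx.2.2.trans_lt hb)

lemma inner_sub_inner_smul_self (he : ‖e‖ = 1) (x : E) : ⟪e, x - ⟪e, x⟫ • e⟫ = 0 := by
  rw [inner_sub_right, real_inner_smul_right, real_inner_self_eq_norm_sq, he]
  ring

lemma norm_sub_inner_smul_self_sq (he : ‖e‖ = 1) (v : E) :
    ‖v - ⟪e, v⟫ • e‖ ^ 2 = ‖v‖ ^ 2 - ⟪e, v⟫ ^ 2 := by
  rw [@norm_sub_sq_real, norm_smul, real_inner_smul_right, real_inner_comm, he,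
    Real.norm_eq_abs, mul_one, sq_abs]
  ring

lemma norm_sub_inner_smul_self (he : ‖e‖ = 1) {x : E} (hx : ‖x‖ = 1) :
    ‖x - ⟪e, x⟫ • e‖ = sin (angle e x) := by
  have hsq : ‖x - ⟪e, x⟫ • e‖ ^ 2 = sin (angle e x) ^ 2 := by
    rw [norm_sub_inner_smul_self_sq he, hx, inner_eq_cos_angle_of_norm_eq_one he hx, sin_sq]
    ring
  exact (pow_left_inj₀ (norm_nonneg _) (sin_angle_nonneg e x) two_ne_zero).1 hsq

lemma real_inner_eq_inner_mul_inner_add (he : ‖e‖ = 1) (x y : E) :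
    ⟪x, y⟫ = ⟪e, x⟫ * ⟪e, y⟫ + ⟪x - ⟪e, x⟫ • e, y - ⟪e, y⟫ • e⟫ := by
  simp only [inner_sub_left, inner_sub_right, real_inner_smul_left, real_inner_smul_right,
    real_inner_self_eq_norm_sq, he, real_inner_comm e]
  ring

variable {g : ℝ → ℝ}

lemma inner_meridianMap (he : ‖e‖ = 1) (x : E) :
    ⟪e, meridianMap e g x⟫ = cos (g (angle e x)) := by
  rw [meridianMap, inner_add_right, real_inner_smul_right, real_inner_smul_right,
    real_inner_self_eq_norm_sq, he, inner_sub_inner_smul_self he]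
  ring

lemma meridianMap_sub_inner_smul (he : ‖e‖ = 1) (x : E) :
    meridianMap e g x - ⟪e, meridianMap e g x⟫ • e =
      (sin (g (angle e x)) / sin (angle e x)) • (x - ⟪e, x⟫ • e) := by
  rw [inner_meridianMap he, meridianMap, add_sub_cancel_left]

lemma norm_meridianMap (he : ‖e‖ = 1) {x : E} (hx : ‖x‖ = 1) (hsin : sin (angle e x) ≠ 0) :
    ‖meridianMap e g x‖ = 1 := by
  have hsq : ‖meridianMap e g x‖ ^ 2 = 1 := by
    rw [meridianMap, @norm_add_sq_real, real_inner_smul_left, real_inner_smul_right,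
      inner_sub_inner_smul_self he, norm_smul, norm_smul, norm_sub_inner_smul_self he hx, he,
      Real.norm_eq_abs, Real.norm_eq_abs, mul_pow, mul_pow, sq_abs, sq_abs, div_pow,
      div_mul_cancel₀ _ (pow_ne_zero 2 hsin)]
    linarith [sin_sq_add_cos_sq (g (angle e x))]
  exact (pow_eq_one_iff_of_nonneg (norm_nonneg _) two_ne_zero).1 hsq

lemma angle_meridianMap (he : ‖e‖ = 1) {x : E} (hx : ‖x‖ = 1) (hsin : sin (angle e x) ≠ 0)
    (hg : g (angle e x) ∈ Icc 0 π) : angle e (meridianMap e g x) = g (angle e x) := by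
  rw [angle, inner_meridianMap he, he, norm_meridianMap he hx hsin, mul_one, div_one,
    arccos_cos hg.1 hg.2]

lemma meridianMap_meridianMap {g' : ℝ → ℝ} (he : ‖e‖ = 1) {x : E} (hx : ‖x‖ = 1)
    (hsin : sin (angle e x) ≠ 0) (hg : g (angle e x) ∈ Icc 0 π) (hsin' : sin (g (angle e x)) ≠ 0)
    (hinv : g' (g (angle e x)) = angle e x) :
    meridianMap e g' (meridianMap e g x) = x := by
  rw [meridianMap, angle_meridianMap he hx hsin hg, hinv, meridianMap_sub_inner_smul he, smul_smul,
    div_mul_div_comm, mul_comm (sin (angle e x)), div_self (mul_ne_zero hsin' hsin), one_smul,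
    ← inner_eq_cos_angle_of_norm_eq_one he hx]
  abel

lemma dist_sq_eq_of_norm_eq_one (he : ‖e‖ = 1) {x y : E} (hx : ‖x‖ = 1) (hy : ‖y‖ = 1) :
    dist x y ^ 2 = 2 * (1 - cos (angle e x - angle e y)) +
      2 * (sin (angle e x) * sin (angle e y) - ⟪x - ⟪e, x⟫ • e, y - ⟪e, y⟫ • e⟫) := by
  rw [dist_eq_norm, @norm_sub_sq_real, hx, hy, real_inner_eq_inner_mul_inner_add he, cos_sub,
    ← inner_eq_cos_angle_of_norm_eq_one he hx, ← inner_eq_cos_angle_of_norm_eq_one he hy]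
  ring

lemma lipschitzOnWith_meridianMap (he : ‖e‖ = 1) {a b : ℝ} {Λ : ℝ≥0} (ha : 0 < a) (hb : b < π)
    (hg : MapsTo g (Icc a b) (Icc 0 π))
    (hg_cos : ∀ α ∈ Icc a b, ∀ β ∈ Icc a b, 1 - cos (g α - g β) ≤ Λ ^ 2 * (1 - cos (α - β)))
    (hg_sin : ∀ α ∈ Icc a b, sin (g α) ≤ Λ * sin α) :
    LipschitzOnWith Λ (meridianMap e g) (polarBand e a b) := by
  refine LipschitzOnWith.of_dist_le_mul fun x ⟨hx, hxa⟩ y ⟨hy, hya⟩ => ?_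
  rw [mem_sphere_zero_iff_norm] at hx hy
  have hsx : 0 < sin (angle e x) := sin_pos_of_pos_of_lt_pi (ha.trans_le hxa.1) (hxa.2.trans_lt hb)
  have hsy : 0 < sin (angle e y) := sin_pos_of_pos_of_lt_pi (ha.trans_le hya.1) (hya.2.trans_lt hb)
  have hW : ⟪x - ⟪e, x⟫ • e, y - ⟪e, y⟫ • e⟫ ≤ sin (angle e x) * sin (angle e y) := by
    refine (real_inner_le_norm _ _).trans_eq ?_
    rw [norm_sub_inner_smul_self he hx, norm_sub_inner_smul_self he hy]
  have hsq : dist (meridianMap e g x) (meridianMap e g y) ^ 2 ≤ (Λ * dist x y) ^ 2 := by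
    rw [mul_pow, dist_sq_eq_of_norm_eq_one he hx hy, dist_sq_eq_of_norm_eq_one he
      (norm_meridianMap he hx hsx.ne') (norm_meridianMap he hy hsy.ne'),
      angle_meridianMap he hx hsx.ne' (hg hxa), angle_meridianMap he hy hsy.ne' (hg hya),
      meridianMap_sub_inner_smul he, meridianMap_sub_inner_smul he, real_inner_smul_left,
      real_inner_smul_right]
    generalize ⟪x - ⟪e, x⟫ • e, y - ⟪e, y⟫ • e⟫ = W at hW ⊢
    generalize angle e x = α at hxa hsx hW ⊢
    generalize angle e y = β at hya hsy hW ⊢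
    have hρ : 0 ≤ sin (g α) / sin α * (sin (g β) / sin β) :=
      mul_nonneg (div_nonneg (sin_nonneg_of_mem_Icc (hg hxa)) hsx.le)
        (div_nonneg (sin_nonneg_of_mem_Icc (hg hya)) hsy.le)
    have hρΛ : sin (g α) / sin α * (sin (g β) / sin β) ≤ Λ ^ 2 := by
      rw [div_mul_div_comm, div_le_iff₀ (by positivity), sq]
      exact mul_le_mul (hg_sin α hxa) (hg_sin β hya) (sin_nonneg_of_mem_Icc (hg hya))
        (by positivity) |>.trans_eq (by ring)
    have hfactor : sin (g α) * sin (g β) - sin (g α) / sin α * (sin (g β) / sin β * W) =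
        sin (g α) / sin α * (sin (g β) / sin β) * (sin α * sin β - W) := by
      field_simp
    rw [hfactor]
    nlinarith [hg_cos α hxa β hya, mul_le_mul_of_nonneg_right hρΛ (sub_nonneg.2 hW)]
  exact (pow_le_pow_iff_left₀ dist_nonneg (by positivity) two_ne_zero).1 hsq

lemma eq_smul_add_smul_meridianMap (he : ‖e‖ = 1) {x : E} (hx : ‖x‖ = 1)
    (hsin : sin (angle e x) ≠ 0) (hsin' : sin (g (angle e x)) ≠ 0) :
    x = (sin (g (angle e x) - angle e x) / sin (g (angle e x))) • e +
      (sin (angle e x) / sin (g (angle e x))) • meridianMap e g x := by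
  have hcoeff : sin (g (angle e x) - angle e x) / sin (g (angle e x)) +
      sin (angle e x) / sin (g (angle e x)) * cos (g (angle e x)) = ⟪e, x⟫ := by
    rw [sin_sub_div_add_div_mul_cos hsin', inner_eq_cos_angle_of_norm_eq_one he hx]
  rw [meridianMap, smul_add, smul_smul, smul_smul, div_mul_div_comm, mul_comm (sin (angle e x)),
    div_self (mul_ne_zero hsin' hsin), one_smul, ← add_assoc, ← add_smul, hcoeff]
  abel

lemma lipschitzOnWith_meridianMap_of_affine (he : ‖e‖ = 1) {a b k K : ℝ} (ha : 0 < a)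
    (hb : b ≤ π / 2) (hkK : |k| ≤ K) (hg_sub : ∀ α β, g α - g β = k * (α - β))
    (hg : MapsTo g (Icc a b) (Icc 0 π)) (hgK : ∀ α ∈ Icc a b, g α ≤ K * α) :
    LipschitzOnWith (K * π / 2).toNNReal (meridianMap e g) (polarBand e a b) := by
  have hπ := pi_pos
  have hK : 0 ≤ K := (abs_nonneg k).trans hkK
  have hΛ : ((K * π / 2).toNNReal : ℝ) = K * π / 2 := Real.coe_toNNReal _ (by positivity)
  refine lipschitzOnWith_meridianMap he ha (by linarith) hg (fun α hα β hβ => ?_) (fun α hα => ?_)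
  · rw [hΛ, hg_sub]
    refine (one_sub_cos_mul_le k
      (abs_le.2 ⟨by linarith [hα.1, hβ.2], by linarith [hα.2, hβ.1]⟩)).trans ?_
    gcongr ?_ * _
    · linarith [cos_le_one (α - β)]
    · refine sq_le_sq.2 ?_
      rw [abs_of_nonneg (by positivity : 0 ≤ K * π / 2), abs_div, abs_mul, abs_of_pos hπ, abs_two]
      gcongr
  · rw [hΛ]
    exact sin_le_mul_sin hK (hg hα).1 (hgK α hα) (ha.trans_le hα.1).le (hα.2.trans hb)

lemma mapsTo_meridianMap_polarBand (he : ‖e‖ = 1) {a b a' b' : ℝ} (ha : 0 < a) (hb : b < π)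
    (ha' : 0 ≤ a') (hb' : b' ≤ π) (hg : MapsTo g (Icc a b) (Icc a' b')) :
    MapsTo (meridianMap e g) (polarBand e a b) (polarBand e a' b') := by
  intro x hx
  have hsin := (sin_angle_pos_of_mem_polarBand ha hb hx).ne'
  have hx1 := norm_eq_one_of_mem_polarBand hx
  have hgx := hg hx.2
  refine ⟨mem_sphere_zero_iff_norm.2 (norm_meridianMap he hx1 hsin), ?_⟩
  rwa [angle_meridianMap he hx1 hsin ⟨ha'.trans hgx.1, hgx.2.trans hb'⟩]

lemma exists_norm_eq_one_angle_eq [FiniteDimensional ℝ E] (hE : 2 ≤ finrank ℝ E) (he : ‖e‖ = 1)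
    {α : ℝ} (hα : α ∈ Icc 0 π) : ∃ x : E, ‖x‖ = 1 ∧ angle e x = α := by
  have he0 : e ≠ 0 := by rintro rfl; simp at he
  have hperp : (ℝ ∙ e)ᗮ ≠ ⊥ := by
    intro h
    have := (ℝ ∙ e).finrank_add_finrank_orthogonal
    rw [h, finrank_bot, finrank_span_singleton he0] at this
    omega
  obtain ⟨v, hv, hv0⟩ := Submodule.exists_mem_ne_zero_of_ne_bot hperp
  rw [Submodule.mem_orthogonal_singleton_iff_inner_right] at hv
  set u := ‖v‖⁻¹ • v
  have hu : ‖u‖ = 1 := norm_smul_inv_norm hv0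
  have heu : ⟪e, u⟫ = 0 := by rw [real_inner_smul_right, hv, mul_zero]
  have hx : ‖cos α • e + sin α • u‖ = 1 := by
    have hsq : ‖cos α • e + sin α • u‖ ^ 2 = 1 := by
      rw [@norm_add_sq_real, real_inner_smul_left, real_inner_smul_right, heu, norm_smul,
        norm_smul, he, hu, Real.norm_eq_abs, Real.norm_eq_abs]
      nlinarith [sin_sq_add_cos_sq α, sq_abs (sin α), sq_abs (cos α)]
    exact (pow_eq_one_iff_of_nonneg (norm_nonneg _) two_ne_zero).1 hsq
  refine ⟨_, hx, ?_⟩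
  rw [angle, hx, he, mul_one, div_one, inner_add_right, real_inner_smul_right,
    real_inner_smul_right, real_inner_self_eq_norm_sq, he, heu, one_pow, mul_one, mul_zero,
    add_zero, arccos_cos hα.1 hα.2]

lemma polarBand_subset_image_meridianMap [FiniteDimensional ℝ E] (hE : 2 ≤ finrank ℝ E)
    (he : ‖e‖ = 1) {ϑ : ℝ} (hϑ0 : 0 < ϑ) (hϑ : ϑ < π) :
    polarBand e 0 ϑ ⊆ meridianMap e (fun α => 8 * α - ϑ) '' polarBand e (ϑ / 8) (ϑ / 4) := by
  intro z ⟨hz, hzϑ⟩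
  rw [mem_sphere_zero_iff_norm] at hz
  rcases (sin_nonneg_of_mem_Icc ⟨hzϑ.1, hzϑ.2.trans hϑ.le⟩).eq_or_lt with hsin | hsin
  · -- `z = e`, where the inverse move is undefined; any point at angle `ϑ/8` is sent to `e`
    have hz0 : angle e z = 0 := by
      rcases (sin_eq_zero_iff_angle_eq_zero_or_angle_eq_pi.1 hsin.symm) with h | h
      · exact h
      · linarith [hzϑ.2]
    obtain ⟨x, hx, hxα⟩ :=
      exists_norm_eq_one_angle_eq hE he (α := ϑ / 8) ⟨by positivity, by linarith⟩
    have hsinx : sin (angle e x) ≠ 0 := by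
      rw [hxα]; exact (sin_pos_of_pos_of_lt_pi (by positivity) (by linarith)).ne'
    refine ⟨x, ⟨mem_sphere_zero_iff_norm.2 hx, by rw [hxα]; constructor <;> linarith⟩, ?_⟩
    have hFx : angle e (meridianMap e (fun α => 8 * α - ϑ) x) = 0 := by
      rw [angle_meridianMap he hx hsinx (by rw [hxα]; constructor <;> linarith), hxα]
      ring
    rw [← eq_of_angle_eq_zero_of_norm_eq hz0 (he.trans hz.symm),
      ← eq_of_angle_eq_zero_of_norm_eq hFx (he.trans (norm_meridianMap he hx hsinx).symm)]
  · have hα : (angle e z + ϑ) / 8 ∈ Icc 0 π := ⟨by linarith [hzϑ.1], by linarith [hzϑ.2]⟩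
    refine ⟨meridianMap e (fun α => (α + ϑ) / 8) z, ⟨mem_sphere_zero_iff_norm.2
      (norm_meridianMap he hz hsin.ne'), ?_⟩, ?_⟩
    · rw [angle_meridianMap he hz hsin.ne' hα]
      constructor <;> linarith [hzϑ.1, hzϑ.2]
    · exact meridianMap_meridianMap he hz hsin.ne' hα
        (sin_pos_of_pos_of_lt_pi (by linarith [hzϑ.1]) (by linarith [hzϑ.2])).ne' (by ring)

variable [MeasurableSpace E] [BorelSpace E] {ϑ d : ℝ}

lemma hausdorffMeasure_polarBand_diff_le (he : ‖e‖ = 1) (hϑ0 : 0 < ϑ) (hϑ : ϑ ≤ π / 2)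
    (hd : 0 ≤ d) {G : Set E}
    (hG : ∀ x ∈ polarBand e (ϑ / 8) (ϑ / 4), x ∉ G → meridianMap e (fun α => 2 * α + ϑ / 2) x ∈ G) :
    μH[d] (polarBand e (ϑ / 8) (ϑ / 4) \ G) ≤ ((4 * π).toNNReal : ℝ≥0∞) ^ d * μH[d] G := by
  have hπ := pi_pos
  set T := meridianMap e (fun α => 2 * α + ϑ / 2)
  set U := meridianMap e (fun β => β / 2 - ϑ / 4)
  have hT : MapsTo T (polarBand e (ϑ / 8) (ϑ / 4)) (polarBand e (3 * ϑ / 4) ϑ) :=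
    mapsTo_meridianMap_polarBand he (by positivity) (by linarith) (by positivity) (by linarith)
      fun α hα => ⟨by linarith [hα.1], by linarith [hα.2]⟩
  have hU := lipschitzOnWith_meridianMap_of_affine he (g := fun β => β / 2 - ϑ / 4) (k := 1 / 2)
    (K := 8) (a := 3 * ϑ / 4) (by positivity) hϑ (by norm_num) (fun α β => by ring)
    (fun β hβ => ⟨by linarith [hβ.1], by linarith [hβ.2]⟩) (fun β hβ => by linarith [hβ.1])
  rw [show (8 : ℝ) * π / 2 = 4 * π by ring] at hU
  have hUT : polarBand e (ϑ / 8) (ϑ / 4) \ G ⊆ U '' (T '' (polarBand e (ϑ / 8) (ϑ / 4) \ G)) := by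
    intro x hx
    refine ⟨T x, mem_image_of_mem T hx, ?_⟩
    have hsin := sin_angle_pos_of_mem_polarBand (by positivity) (by linarith) hx.1
    exact meridianMap_meridianMap he (norm_eq_one_of_mem_polarBand hx.1) hsin.ne'
      ⟨by linarith [hx.1.2.1], by linarith [hx.1.2.2]⟩
      (sin_pos_of_pos_of_lt_pi (by linarith [hx.1.2.1]) (by linarith [hx.1.2.2])).ne' (by ring)
  calc μH[d] (polarBand e (ϑ / 8) (ϑ / 4) \ G)
      ≤ μH[d] (U '' (T '' (polarBand e (ϑ / 8) (ϑ / 4) \ G))) := measure_mono hUT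
    _ ≤ ((4 * π).toNNReal : ℝ≥0∞) ^ d * μH[d] (T '' (polarBand e (ϑ / 8) (ϑ / 4) \ G)) :=
        (hU.mono (image_subset_iff.2 fun x hx => hT hx.1)).hausdorffMeasure_image_le hd
    _ ≤ ((4 * π).toNNReal : ℝ≥0∞) ^ d * μH[d] G := by
        gcongr
        rintro _ ⟨x, ⟨hx, hxG⟩, rfl⟩
        exact hG x hx hxG

lemma hausdorffMeasure_polarBand_le_inner [FiniteDimensional ℝ E] (hE : 2 ≤ finrank ℝ E)
    (he : ‖e‖ = 1) (hϑ0 : 0 < ϑ) (hϑ : ϑ ≤ π / 2) (hd : 0 ≤ d) :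
    μH[d] (polarBand e 0 ϑ) ≤
      ((4 * π).toNNReal : ℝ≥0∞) ^ d * μH[d] (polarBand e (ϑ / 8) (ϑ / 4)) := by
  have hF := lipschitzOnWith_meridianMap_of_affine he (g := fun α => 8 * α - ϑ) (k := 8) (K := 8)
    (a := ϑ / 8) (b := ϑ / 4) (by positivity) (by linarith) (by norm_num) (fun α β => by ring)
    (fun α hα => ⟨by linarith [hα.1], by linarith [hα.2, pi_pos]⟩) (fun α hα => by linarith)
  rw [show (8 : ℝ) * π / 2 = 4 * π by ring] at hF
  exact (measure_mono (polarBand_subset_image_meridianMap hE he hϑ0 (by linarith [pi_pos]))).trans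
    (hF.hausdorffMeasure_image_le hd)

theorem hausdorffMeasure_polarBand_le [FiniteDimensional ℝ E] (hE : 2 ≤ finrank ℝ E)
    (he : ‖e‖ = 1) (hϑ0 : 0 < ϑ) (hϑ : ϑ ≤ π / 2) (hd : 0 ≤ d) {G : Set E}
    (hG : ∀ x ∈ polarBand e (ϑ / 8) (ϑ / 4), x ∉ G → meridianMap e (fun α => 2 * α + ϑ / 2) x ∈ G) :
    μH[d] (polarBand e 0 ϑ) ≤
      ((4 * π).toNNReal : ℝ≥0∞) ^ d * (1 + ((4 * π).toNNReal : ℝ≥0∞) ^ d) * μH[d] G :=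
  calc μH[d] (polarBand e 0 ϑ)
      ≤ ((4 * π).toNNReal : ℝ≥0∞) ^ d * μH[d] (polarBand e (ϑ / 8) (ϑ / 4)) :=
        hausdorffMeasure_polarBand_le_inner hE he hϑ0 hϑ hd
    _ ≤ ((4 * π).toNNReal : ℝ≥0∞) ^ d * (μH[d] G + ((4 * π).toNNReal : ℝ≥0∞) ^ d * μH[d] G) := by
        gcongr
        exact (measure_le_inter_add_sdiff _ _ G).trans
          (add_le_add (measure_mono inter_subset_right)
            (hausdorffMeasure_polarBand_diff_le he hϑ0 hϑ hd hG))
    _ = ((4 * π).toNNReal : ℝ≥0∞) ^ d * (1 + ((4 * π).toNNReal : ℝ≥0∞) ^ d) * μH[d] G := by ring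

end Meridian

section SphereMeasure

variable {E : Type*} [NormedAddCommGroup E] [InnerProductSpace ℝ E] {e : E}

lemma angle_le_iff_cos_le_inner (he : ‖e‖ = 1) {x : E} (hx : ‖x‖ = 1) {ϑ : ℝ} (hϑ : ϑ ∈ Icc 0 π) :
    angle e x ≤ ϑ ↔ cos ϑ ≤ ⟪e, x⟫ := by
  rw [inner_eq_cos_angle_of_norm_eq_one he hx,
    strictAntiOn_cos.le_iff_ge hϑ ⟨angle_nonneg e x, angle_le_pi e x⟩]

lemma polarBand_zero_eq (he : ‖e‖ = 1) {ϑ : ℝ} (hϑ : ϑ ∈ Icc 0 π) :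
    polarBand e 0 ϑ = {x ∈ sphere (0 : E) 1 | cos ϑ ≤ ⟪e, x⟫} := by
  ext x
  refine and_congr_right fun hx => ?_
  rw [mem_sphere_zero_iff_norm] at hx
  rw [mem_Icc, ← angle_le_iff_cos_le_inner he hx hϑ]
  exact and_iff_right (angle_nonneg e x)

lemma abs_sqrt_sub_sqrt_le {a b c : ℝ} (hc : 0 < c) (ha : c ≤ √a) (hb : c ≤ √b) :
    |√a - √b| ≤ |a - b| / (2 * c) := by
  have ha0 : 0 ≤ a := by by_contra h; rw [sqrt_eq_zero_of_nonpos (by linarith)] at ha; linarith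
  have hb0 : 0 ≤ b := by by_contra h; rw [sqrt_eq_zero_of_nonpos (by linarith)] at hb; linarith
  have hab : |a - b| = |√a - √b| * (√a + √b) := by
    rw [← abs_of_nonneg (by positivity : 0 ≤ √a + √b), ← abs_mul]
    congr 1
    nlinarith [sq_sqrt ha0, sq_sqrt hb0]
  rw [le_div_iff₀ (by positivity), hab]
  gcongr
  linarith

def hemisphereParam (e : E) (y : (ℝ ∙ e)ᗮ) : E := (y : E) + √(1 - ‖y‖ ^ 2) • e

lemma lipschitzOnWith_hemisphereParam (he : ‖e‖ = 1) {s : ℝ} (hs : s < 1) :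
    LipschitzOnWith (1 + 1 / √(1 - s ^ 2)).toNNReal (hemisphereParam e)
      (closedBall 0 s) := by
  refine LipschitzOnWith.of_dist_le_mul fun y hy z hz => ?_
  rw [mem_closedBall_zero_iff] at hy hz
  have hs0 : 0 ≤ s := (norm_nonneg _).trans hy
  set c := √(1 - s ^ 2)
  have hc : 0 < c := sqrt_pos.2 (by nlinarith)
  have hcy : c ≤ √(1 - ‖y‖ ^ 2) := sqrt_le_sqrt (by nlinarith [norm_nonneg y])
  have hcz : c ≤ √(1 - ‖z‖ ^ 2) := sqrt_le_sqrt (by nlinarith [norm_nonneg z])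
  have hyz : |‖z‖ - ‖y‖| ≤ dist y z := by
    rw [dist_comm, dist_eq_norm]
    exact abs_norm_sub_norm_le z y
  have hsqrt : |√(1 - ‖y‖ ^ 2) - √(1 - ‖z‖ ^ 2)| ≤ 1 / c * dist y z := by
    refine (abs_sqrt_sub_sqrt_le hc hcy hcz).trans ?_
    rw [show 1 - ‖y‖ ^ 2 - (1 - ‖z‖ ^ 2) = (‖z‖ + ‖y‖) * (‖z‖ - ‖y‖) by ring, abs_mul,
      abs_of_nonneg (by positivity), div_le_iff₀ (by positivity)]
    calc (‖z‖ + ‖y‖) * |‖z‖ - ‖y‖| ≤ 2 * dist y z := by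
          gcongr
          nlinarith [hs.le]
      _ = 1 / c * dist y z * (2 * c) := by field_simp
  rw [Real.coe_toNNReal _ (by positivity), dist_eq_norm, hemisphereParam, hemisphereParam,
    add_sub_add_comm, ← sub_smul]
  calc ‖(y : E) - z + (√(1 - ‖y‖ ^ 2) - √(1 - ‖z‖ ^ 2)) • e‖
      ≤ ‖(y : E) - z‖ + |√(1 - ‖y‖ ^ 2) - √(1 - ‖z‖ ^ 2)| := by
        refine (norm_add_le _ _).trans_eq ?_
        rw [norm_smul, he, mul_one, Real.norm_eq_abs]
    _ ≤ dist y z + 1 / c * dist y z := by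
        exact add_le_add (by rw [Subtype.dist_eq, dist_eq_norm]) hsqrt
    _ = (1 + 1 / c) * dist y z := by ring

lemma inner_hemisphereParam (he : ‖e‖ = 1) (y : (ℝ ∙ e)ᗮ) :
    ⟪e, hemisphereParam e y⟫ = √(1 - ‖y‖ ^ 2) := by
  rw [hemisphereParam, inner_add_right, Submodule.mem_orthogonal_singleton_iff_inner_right.1 y.2,
    real_inner_smul_right, real_inner_self_eq_norm_sq, he]
  ring

lemma norm_hemisphereParam (he : ‖e‖ = 1) {y : (ℝ ∙ e)ᗮ} (hy : ‖y‖ ≤ 1) :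
    ‖hemisphereParam e y‖ = 1 := by
  have hsq : ‖hemisphereParam e y‖ ^ 2 = 1 := by
    rw [hemisphereParam, @norm_add_sq_real, real_inner_smul_right,
      Submodule.mem_orthogonal_singleton_iff_inner_left.1 y.2, norm_smul, he, Real.norm_eq_abs,
      mul_one, sq_abs, sq_sqrt (by nlinarith [norm_nonneg y]), Submodule.coe_norm]
    ring
  exact (pow_eq_one_iff_of_nonneg (norm_nonneg _) two_ne_zero).1 hsq

lemma polarBand_subset_image_hemisphereParam (he : ‖e‖ = 1) {ϑ : ℝ} (hϑ0 : 0 ≤ ϑ)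
    (hϑ : ϑ ≤ π / 2) : polarBand e 0 ϑ ⊆ hemisphereParam e '' closedBall 0 (sin ϑ) := by
  intro x ⟨hx, hxϑ⟩
  rw [mem_sphere_zero_iff_norm] at hx
  have hperp : x - ⟪e, x⟫ • e ∈ (ℝ ∙ e)ᗮ :=
    Submodule.mem_orthogonal_singleton_iff_inner_right.2 (inner_sub_inner_smul_self he x)
  refine ⟨⟨_, hperp⟩, ?_, ?_⟩
  · rw [mem_closedBall_zero_iff, Submodule.coe_norm, norm_sub_inner_smul_self he hx]
    exact sin_le_sin_of_le_of_le_pi_div_two (by linarith [hxϑ.1]) hϑ hxϑ.2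
  · rw [hemisphereParam, Submodule.coe_norm, norm_sub_inner_smul_self he hx, ← cos_sq',
      sqrt_sq (cos_nonneg_of_mem_Icc ⟨by linarith [hxϑ.1], hxϑ.2.trans hϑ⟩),
      ← inner_eq_cos_angle_of_norm_eq_one he hx, sub_add_cancel]

lemma lipschitzWith_sub_inner_smul (he : ‖e‖ = 1) :
    LipschitzWith 1 (fun x : E => x - ⟪e, x⟫ • e) := by
  refine LipschitzWith.of_dist_le_mul fun x y => ?_
  rw [NNReal.coe_one, one_mul, dist_eq_norm, dist_eq_norm,
    show x - ⟪e, x⟫ • e - (y - ⟪e, y⟫ • e) = (x - y) - ⟪e, x - y⟫ • e by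
      rw [inner_sub_right, sub_smul]; abel]
  refine (pow_le_pow_iff_left₀ (norm_nonneg _) (norm_nonneg _) two_ne_zero).1 ?_
  rw [norm_sub_inner_smul_self_sq he]
  linarith [sq_nonneg ⟪e, x - y⟫]

lemma ball_subset_image_polarBand (he : ‖e‖ = 1) {ϑ : ℝ} (hϑ0 : 0 ≤ ϑ) (hϑ : ϑ ≤ π / 2) :
    Subtype.val '' ball (0 : (ℝ ∙ e)ᗮ) (sin ϑ) ⊆
      (fun x => x - ⟪e, x⟫ • e) '' polarBand e 0 ϑ := by
  rintro _ ⟨y, hy, rfl⟩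
  rw [mem_ball_zero_iff] at hy
  have hy1 : ‖y‖ ≤ 1 := hy.le.trans (sin_le_one ϑ)
  refine ⟨hemisphereParam e y, ?_, ?_⟩
  · rw [polarBand_zero_eq he ⟨hϑ0, by linarith [pi_pos]⟩]
    refine ⟨mem_sphere_zero_iff_norm.2 (norm_hemisphereParam he hy1), ?_⟩
    rw [inner_hemisphereParam he, ← sqrt_sq (cos_nonneg_of_mem_Icc ⟨by linarith [pi_pos], hϑ⟩),
      cos_sq']
    have hsin := sin_nonneg_of_nonneg_of_le_pi hϑ0 (by linarith [pi_pos] : ϑ ≤ π)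
    exact sqrt_le_sqrt (by nlinarith [norm_nonneg y])
  · simp only [inner_hemisphereParam he]
    rw [hemisphereParam, add_sub_cancel_right]

variable [FiniteDimensional ℝ E] [MeasurableSpace E] [BorelSpace E] {m : ℕ}

lemma isAddHaarMeasure_hausdorffMeasure_orthogonal (hE : finrank ℝ E = m + 1) (he : ‖e‖ = 1) :
    (μH[m] : Measure (ℝ ∙ e)ᗮ).IsAddHaarMeasure := by
  have : Fact (finrank ℝ E = m + 1) := ⟨hE⟩
  have hV : finrank ℝ (ℝ ∙ e)ᗮ = m :=
    Submodule.finrank_orthogonal_span_singleton (ne_zero_of_norm_ne_zero (he ▸ one_ne_zero))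
  rw [← hV]
  infer_instance

theorem hausdorffMeasure_polarBand_pos (hE : finrank ℝ E = m + 1) (he : ‖e‖ = 1) {ϑ : ℝ}
    (hϑ0 : 0 < ϑ) (hϑ : ϑ ≤ π / 2) : 0 < μH[m] (polarBand e 0 ϑ) := by
  have := isAddHaarMeasure_hausdorffMeasure_orthogonal hE he
  calc 0 < μH[m] (ball (0 : (ℝ ∙ e)ᗮ) (sin ϑ)) :=
        measure_ball_pos _ _ (sin_pos_of_pos_of_lt_pi hϑ0 (by linarith [pi_pos]))
    _ = μH[m] (Subtype.val '' ball (0 : (ℝ ∙ e)ᗮ) (sin ϑ)) :=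
        (isometry_subtype_coe.hausdorffMeasure_image (Or.inl m.cast_nonneg) _).symm
    _ ≤ μH[m] ((fun x => x - ⟪e, x⟫ • e) '' polarBand e 0 ϑ) :=
        measure_mono (ball_subset_image_polarBand he hϑ0.le hϑ)
    _ ≤ μH[m] (polarBand e 0 ϑ) := by
        simpa using (lipschitzWith_sub_inner_smul he).lipschitzOnWith.hausdorffMeasure_image_le
          (s := polarBand e 0 ϑ) m.cast_nonneg

theorem hausdorffMeasure_polarBand_lt_top (hE : finrank ℝ E = m + 1) (he : ‖e‖ = 1) {ϑ : ℝ}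
    (hϑ0 : 0 ≤ ϑ) (hϑ : ϑ < π / 2) : μH[m] (polarBand e 0 ϑ) < ∞ := by
  have := isAddHaarMeasure_hausdorffMeasure_orthogonal hE he
  have hs : sin ϑ < 1 := by
    simpa using sin_lt_sin_of_lt_of_le_pi_div_two (by linarith [pi_pos]) le_rfl hϑ
  calc μH[m] (polarBand e 0 ϑ) ≤ μH[m] (hemisphereParam e '' closedBall 0 (sin ϑ)) :=
        measure_mono (polarBand_subset_image_hemisphereParam he hϑ0 hϑ.le)
    _ ≤ _ := (lipschitzOnWith_hemisphereParam he hs).hausdorffMeasure_image_le m.cast_nonneg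
    _ < ∞ := ENNReal.mul_lt_top (by simp) (isCompact_closedBall _ _).measure_lt_top

theorem hausdorffMeasure_sphere_lt_top (hE : finrank ℝ E = m + 1) :
    μH[m] (sphere (0 : E) 1) < ∞ := by
  refine (isCompact_sphere 0 1).measure_lt_top_of_nhdsWithin fun x hx => ?_
  rw [mem_sphere_zero_iff_norm] at hx
  refine ⟨polarBand x 0 (π / 3), ?_, hausdorffMeasure_polarBand_lt_top hE hx
    (by positivity) (by linarith [pi_pos])⟩
  rw [polarBand_zero_eq hx ⟨by positivity, by linarith [pi_pos]⟩, cos_pi_div_three]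
  refine mem_nhdsWithin.2 ⟨{y | 1 / 2 < ⟪x, y⟫}, isOpen_lt continuous_const
    (continuous_const.inner continuous_id), ?_, fun y hy => ⟨hy.2, hy.1.le⟩⟩
  rw [mem_ofPred_eq, real_inner_self_eq_norm_sq, hx]
  norm_num

end SphereMeasure

section SupportFunction

variable {N : ℕ} {K : Set (Eucl N)}

lemma inner_le_suppFn (hK : IsCompact K) {z : Eucl N} (hz : z ∈ K) (θ : Eucl N) :
    ⟪z, θ⟫ ≤ suppFn K θ :=
  le_csSup (hK.image (continuous_id.inner continuous_const)).bddAbove ⟨z, hz, rfl⟩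

lemma suppFn_le (hne : K.Nonempty) {θ : Eucl N} {c : ℝ} (h : ∀ z ∈ K, ⟪z, θ⟫ ≤ c) :
    suppFn K θ ≤ c :=
  csSup_le (hne.image _) (forall_mem_image.2 h)

lemma suppFn_smul_add_smul_le (hK : IsCompact K) (hne : K.Nonempty) {s t : ℝ} (hs : 0 ≤ s)
    (ht : 0 ≤ t) (p q : Eucl N) :
    suppFn K (s • p + t • q) ≤ s * suppFn K p + t * suppFn K q := by
  refine suppFn_le hne fun z hz => ?_
  rw [inner_add_right, real_inner_smul_right, real_inner_smul_right]
  gcongr <;> exact inner_le_suppFn hK hz _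

lemma continuous_suppFn (hK : IsCompact K) (hne : K.Nonempty) : Continuous (suppFn K) := by
  obtain ⟨M, hM⟩ := hK.isBounded.exists_norm_le
  refine (LipschitzWith.of_le_add_mul' M fun θ θ' => suppFn_le hne fun z hz => ?_).continuous
  calc ⟪z, θ⟫ = ⟪z, θ'⟫ + ⟪z, θ - θ'⟫ := by rw [← inner_add_right, add_sub_cancel]
    _ ≤ suppFn K θ' + M * dist θ θ' := by
        gcongr
        · exact inner_le_suppFn hK hz θ'
        · rw [dist_eq_norm]
          exact (real_inner_le_norm _ _).trans
            (mul_le_mul_of_nonneg_right (hM z hz) (norm_nonneg _))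

end SupportFunction

section Oscillation

variable {N : ℕ} {K : Set (Eucl N)} {R ϑ : ℝ} {e : Eucl N}

lemma cap_eq_polarBand (he : ‖e‖ = 1) (hϑ : ϑ ∈ Icc 0 π) : cap e ϑ = polarBand e 0 ϑ :=
  (polarBand_zero_eq he hϑ).symm

lemma cap_subset_sphere (e : Eucl N) (ϑ : ℝ) : cap e ϑ ⊆ sphere 0 1 := sep_subset _ _

lemma isCompact_cap (e : Eucl N) (ϑ : ℝ) : IsCompact (cap e ϑ) :=
  show IsCompact (sphere 0 1 ∩ {x | cos ϑ ≤ ⟪e, x⟫}) from (isCompact_sphere 0 1).inter_right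
    (isClosed_le continuous_const (continuous_const.inner continuous_id))

lemma half_sub_suppFn_le (hK : IsCompact K) (hne : K.Nonempty) (hR : 0 < R) (he : ‖e‖ = 1)
    (hϑ0 : 0 < ϑ) (hϑ : ϑ ≤ π / 2) (hKe : suppFn K e ≤ R * cos ϑ) {x : Eucl N}
    (hx : x ∈ polarBand e (ϑ / 8) (ϑ / 4)) :
    (R - suppFn K e) / 2 ≤
      |suppFn K x - R| + |suppFn K (meridianMap e (fun α => 2 * α + ϑ / 2) x) - R| := by
  have hπ := pi_pos
  have hx1 := norm_eq_one_of_mem_polarBand hx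
  obtain ⟨-, hα⟩ := hx
  have hsα : 0 < sin (angle e x) :=
    sin_pos_of_pos_of_lt_pi (by linarith [hα.1]) (by linarith [hα.2])
  have hsβ : 0 < sin (2 * angle e x + ϑ / 2) :=
    sin_pos_of_pos_of_lt_pi (by linarith [hα.1]) (by linarith [hα.2])
  have hdecomp := eq_smul_add_smul_meridianMap (g := fun α => 2 * α + ϑ / 2) he hx1 hsα.ne' hsβ.ne'
  have hcoef := sin_sub_div_add_div_mul_cos (α := angle e x) hsβ.ne'
  have hhalf := sin_add_half_sin_le (by linarith [hα.1]) hα.2 hϑ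
  set y := meridianMap e (fun α => 2 * α + ϑ / 2) x
  rw [show 2 * angle e x + ϑ / 2 - angle e x = angle e x + ϑ / 2 by ring] at hdecomp hcoef
  generalize hs : sin (angle e x + ϑ / 2) / sin (2 * angle e x + ϑ / 2) = s at hdecomp hcoef
  generalize ht : sin (angle e x) / sin (2 * angle e x + ϑ / 2) = t at hdecomp hcoef
  have hs0 : 0 ≤ s := hs ▸ div_nonneg
    (sin_nonneg_of_nonneg_of_le_pi (by linarith [hα.1]) (by linarith [hα.2])) hsβ.le
  have ht0 : 0 ≤ t := ht ▸ div_nonneg hsα.le hsβ.le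
  have ht1 : t ≤ 1 := ht ▸ (div_le_one hsβ).2
    (sin_le_sin_of_le_of_le_pi_div_two (by linarith [hα.1]) (by linarith [hα.2])
      (by linarith [hα.1]))
  have hst : 1 / 2 ≤ s - t := by
    rw [← hs, ← ht, ← sub_div, le_div_iff₀ hsβ]
    linarith
  have hcosβ : cos ϑ ≤ cos (2 * angle e x + ϑ / 2) :=
    cos_le_cos_of_nonneg_of_le_pi (by linarith [hα.1]) (by linarith) (by linarith [hα.2])
  have hconv : suppFn K x ≤ s * suppFn K e + t * suppFn K y :=
    calc suppFn K x = suppFn K (s • e + t • y) := congrArg _ hdecomp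
      _ ≤ _ := suppFn_smul_add_smul_le hK hne hs0 ht0 e y
  have hδ : 0 ≤ R - suppFn K e := by nlinarith [cos_le_one ϑ]
  have h1 : R * (s + t - 1) ≤ t * (R - suppFn K e) := by
    nlinarith [mul_nonneg hR.le (sub_nonneg.2 (cos_le_one (angle e x))),
      mul_nonneg (mul_nonneg hR.le ht0) (sub_nonneg.2 hcosβ), mul_nonneg ht0 (sub_nonneg.2 hKe)]
  have h2 : t * (suppFn K y - R) ≤ |suppFn K y - R| := by
    nlinarith [le_abs_self (suppFn K y - R), abs_nonneg (suppFn K y - R)]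
  nlinarith [neg_abs_le (suppFn K x - R)]

theorem hausdorffMeasure_cap_le (hN : 2 ≤ N) (hK : IsCompact K) (hne : K.Nonempty) (hR : 0 < R)
    (he : ‖e‖ = 1) (hϑ0 : 0 < ϑ) (hϑ : ϑ ≤ π / 2) (hKe : suppFn K e ≤ R * cos ϑ) {d : ℝ}
    (hd : 0 ≤ d) :
    μH[d] (cap e ϑ) ≤ ((4 * π).toNNReal : ℝ≥0∞) ^ d * (1 + ((4 * π).toNNReal : ℝ≥0∞) ^ d) *
      μH[d] {x ∈ cap e ϑ | (R - suppFn K e) / 4 ≤ |suppFn K x - R|} := by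
  have hπ := pi_pos
  rw [cap_eq_polarBand he ⟨hϑ0.le, by linarith⟩]
  refine hausdorffMeasure_polarBand_le (by simpa using hN) he hϑ0 hϑ hd fun x hx hxG => ?_
  have hTx : meridianMap e (fun α => 2 * α + ϑ / 2) x ∈ polarBand e 0 ϑ :=
    mapsTo_meridianMap_polarBand he (by positivity) (by linarith) le_rfl (by linarith)
      (fun α hα => ⟨by linarith [hα.1], by linarith [hα.2]⟩) hx
  have hx0 : x ∈ polarBand e 0 ϑ := ⟨hx.1, by linarith [hx.2.1], by linarith [hx.2.2]⟩
  refine ⟨hTx, ?_⟩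
  have hlt : |suppFn K x - R| < (R - suppFn K e) / 4 := lt_of_not_ge fun h => hxG ⟨hx0, h⟩
  linarith [half_sub_suppFn_le hK hne hR he hϑ0 hϑ hKe hx]

end Oscillation

instance (n : ℕ) : IsFiniteMeasure (sphσ n) := by
  refine ⟨lt_of_le_of_lt ?_ ENNReal.one_lt_top⟩
  rw [sphσ, Measure.smul_apply, Measure.restrict_apply MeasurableSet.univ, univ_inter, smul_eq_mul]
  exact ENNReal.inv_mul_le_one _

section NormalizedMeasure

variable {m : ℕ} {e : Eucl (m + 1)} {ϑ : ℝ}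

lemma sphσ_succ_apply {X : Set (Eucl (m + 1))} (hX : X ⊆ sphere 0 1) :
    sphσ (m + 1) X = (μH[m] (sphere (0 : Eucl (m + 1)) 1))⁻¹ * μH[m] X := by
  rw [sphσ, show ((m + 1 : ℕ) : ℝ) - 1 = m by push_cast; ring, Measure.smul_apply,
    Measure.restrict_apply' isClosed_sphere.measurableSet, inter_eq_left.2 hX, smul_eq_mul]

lemma sphσ_cap_pos (he : ‖e‖ = 1) (hϑ0 : 0 < ϑ) (hϑ : ϑ ≤ π / 2) : 0 < sphσ (m + 1) (cap e ϑ) := by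
  rw [sphσ_succ_apply (cap_subset_sphere e ϑ), cap_eq_polarBand he ⟨hϑ0.le, by linarith [pi_pos]⟩]
  exact ENNReal.mul_pos (ENNReal.inv_ne_zero.2
    (hausdorffMeasure_sphere_lt_top finrank_euclideanSpace_fin).ne)
    (hausdorffMeasure_polarBand_pos finrank_euclideanSpace_fin he hϑ0 hϑ).ne'

theorem sphσ_cap_le (hm : 2 ≤ m + 1) {K : Set (Eucl (m + 1))} (hK : IsCompact K)
    (hne : K.Nonempty) {R : ℝ} (hR : 0 < R) (he : ‖e‖ = 1) (hϑ0 : 0 < ϑ) (hϑ : ϑ ≤ π / 2)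
    (hKe : suppFn K e ≤ R * cos ϑ) :
    sphσ (m + 1) (cap e ϑ) ≤ (((4 * π).toNNReal ^ m * (1 + (4 * π).toNNReal ^ m) : ℝ≥0) : ℝ≥0∞) *
      sphσ (m + 1) {x ∈ cap e ϑ | (R - suppFn K e) / 4 ≤ |suppFn K x - R|} := by
  have hμ := hausdorffMeasure_cap_le hm hK hne hR he hϑ0 hϑ hKe (Nat.cast_nonneg m)
  rw [ENNReal.rpow_natCast] at hμ
  rw [sphσ_succ_apply (cap_subset_sphere e ϑ),
    sphσ_succ_apply ((sep_subset _ _).trans (cap_subset_sphere e ϑ)),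
    mul_left_comm]
  push_cast
  gcongr

end NormalizedMeasure

lemma mul_toReal_le_mul_setIntegral {X : Type*} [MeasurableSpace X] {μ : Measure X}
    [IsFiniteMeasure μ] {S : Set X} {f : X → ℝ} (hS : MeasurableSet S) (hf : Measurable f)
    (hfi : IntegrableOn f S μ) (hf0 : ∀ x ∈ S, 0 ≤ f x) {ε : ℝ} (hε : 0 ≤ ε) {M : ℝ≥0}
    (h : μ S ≤ M * μ {x ∈ S | ε ≤ f x}) :
    ε * (μ S).toReal ≤ M * ∫ x in S, f x ∂μ := by
  set G := {x ∈ S | ε ≤ f x}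
  have hGS : G ⊆ S := sep_subset _ _
  have hμ : (μ S).toReal ≤ M * (μ G).toReal := by
    simpa using ENNReal.toReal_mono (by finiteness) h
  have hG : ε * (μ G).toReal ≤ ∫ x in G, f x ∂μ :=
    setIntegral_ge_of_const_le_real (hS.inter (measurableSet_le measurable_const hf))
      (measure_ne_top _ _) (fun x hx => hx.2) (hfi.mono_set hGS)
  have hGS' : ∫ x in G, f x ∂μ ≤ ∫ x in S, f x ∂μ :=
    setIntegral_mono_set hfi ((ae_restrict_iff' hS).2 (Filter.Eventually.of_forall hf0))
      hGS.eventuallyLE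
  calc ε * (μ S).toReal ≤ ε * (M * (μ G).toReal) := by gcongr
    _ = M * (ε * (μ G).toReal) := by ring
    _ ≤ M * ∫ x in S, f x ∂μ := by gcongr; exact hG.trans hGS'

/-- the higher-dimensional maximal-function corollary. -/
theorem stmt_8 (n : ℕ) (hn : 2 ≤ n) :
    ∃ C : ℝ, 0 < C ∧
      ∀ K : Set (Eucl n), Convex ℝ K → IsCompact K → (0 : Eucl n) ∈ interior K →
        ∀ R : ℝ, 0 < R → ∀ e ∈ sphere (0 : Eucl n) 1, ∀ ϑ ∈ Ioo 0 (π / 2),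
          suppFn K e ≤ R * Real.cos ϑ →
          |suppFn K e - R| ≤
            C * ((sphσ n (cap e ϑ)).toReal)⁻¹ *
              ∫ x in cap e ϑ, |suppFn K x - R| ∂(sphσ n) := by
  obtain ⟨m, rfl⟩ : ∃ m, n = m + 1 := ⟨n - 1, by omega⟩
  set M : ℝ≥0 := (4 * π).toNNReal ^ m * (1 + (4 * π).toNNReal ^ m)
  have hM : 0 < M := mul_pos (pow_pos (Real.toNNReal_pos.2 (by positivity)) m) (by positivity)
  refine ⟨4 * M, by positivity, fun K _ hK hK0 R hR e he ϑ ⟨hϑ0, hϑ⟩ hKe => ?_⟩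
  rw [mem_sphere_zero_iff_norm] at he
  have hne : K.Nonempty := ⟨0, interior_subset hK0⟩
  have hδ : suppFn K e - R < 0 := by
    nlinarith [cos_lt_cos_of_nonneg_of_le_pi le_rfl (by linarith [pi_pos]) hϑ0, cos_zero]
  have hpos := ENNReal.toReal_pos (sphσ_cap_pos he hϑ0 hϑ.le).ne' (measure_ne_top _ _)
  have hf : Continuous fun x => |suppFn K x - R| :=
    ((continuous_suppFn hK hne).sub continuous_const).abs
  have hint := mul_toReal_le_mul_setIntegral (isCompact_cap e ϑ).isClosed.measurableSet
    hf.measurable (hf.continuousOn.integrableOn_compact (isCompact_cap e ϑ))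
    (fun _ _ => abs_nonneg _) (by linarith) (sphσ_cap_le hn hK hne hR he hϑ0 hϑ.le hKe)
  rw [abs_of_neg hδ]
  calc -(suppFn K e - R) = (R - suppFn K e) / 4 * (sphσ (m + 1) (cap e ϑ)).toReal * 4 /
        (sphσ (m + 1) (cap e ϑ)).toReal := by field_simp; ring
    _ ≤ M * (∫ x in cap e ϑ, |suppFn K x - R| ∂(sphσ (m + 1))) * 4 /
        (sphσ (m + 1) (cap e ϑ)).toReal := by gcongr
    _ = _ := by ring

end
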